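/- Let $(\Omega, d)$ be a Polish metric space, $1 \le p \le 2$, and $\mu, \pi \in \mathcal{P}_p(\Omega)$ with $W_\infty(\mu, \pi) < \infty$. Suppose $\mu$ satisfies the defective $p$-transport-entropy inequality $W_p(\nu, \mu) \le \sqrt{2C\,\mathrm{KL}(\nu \| \mu)} + M$ for all $\nu \in \mathcal{P}_p(\Omega)$, with constants $C, M \ge 0$. Then $\pi$ satisfies $W_p(\nu, \pi) \le \sqrt{2C\,\mathrm{KL}(\nu \| \pi)} + M + 2W_\infty(\mu, \pi)$ for all $\nu \in \mathcal{P}_p(\Omega)$. -/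

import Mathlib

open MeasureTheory ProbabilityTheory ENNReal
open scoped Classical

noncomputable section

/-- A coupling of two measures. -/
def IsCoupling {Ω : Type*} [MeasurableSpace Ω] (γ : Measure (Ω × Ω)) (μ ν : Measure Ω) : Prop :=
  γ.map Prod.fst = μ ∧ γ.map Prod.snd = ν

/-- The `p`-Wasserstein distance. -/
noncomputable def Wp {Ω : Type*} [MeasurableSpace Ω] [PseudoMetricSpace Ω]
    (p : ℝ) (μ ν : Measure Ω) : ℝ :=
  sInf {r : ℝ | ∃ γ : Measure (Ω × Ω), IsProbabilityMeasure γ ∧ IsCoupling γ μ ν ∧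
    (∫⁻ z, ENNReal.ofReal (dist z.1 z.2 ^ p) ∂γ) ≠ ⊤ ∧
    r = ((∫⁻ z, ENNReal.ofReal (dist z.1 z.2 ^ p) ∂γ) ^ (1/p)).toReal}

/-- The `∞`-Wasserstein distance. -/
noncomputable def Winf {Ω : Type*} [MeasurableSpace Ω] [PseudoMetricSpace Ω]
    (μ ν : Measure Ω) : ℝ≥0∞ :=
  sInf {r : ℝ≥0∞ | ∃ γ : Measure (Ω × Ω), IsProbabilityMeasure γ ∧ IsCoupling γ μ ν ∧
    r = essSup (fun z => ENNReal.ofReal (dist z.1 z.2)) γ}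

/-- Relative entropy (Kullback--Leibler divergence). -/
noncomputable def KL {Ω : Type*} [MeasurableSpace Ω] (μ ν : Measure Ω) : ℝ≥0∞ :=
  if μ ≪ ν ∧ Integrable (llr μ ν) μ then ENNReal.ofReal (∫ x, llr μ ν x ∂μ) else ⊤

/-- Probability measures with finite `p`-th moment. -/
def MemPp {Ω : Type*} [MeasurableSpace Ω] [PseudoMetricSpace Ω] (p : ℝ) (μ : Measure Ω) : Prop :=
  IsProbabilityMeasure μ ∧ ∃ x₀ : Ω, (∫⁻ x, ENNReal.ofReal (dist x x₀ ^ p) ∂μ) ≠ ⊤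

/-- The defective `p`-transport-entropy inequality `T_p(A, B)`. -/
def DefTp {Ω : Type*} [MeasurableSpace Ω] [PseudoMetricSpace Ω]
    (p A B : ℝ) (π : Measure Ω) : Prop :=
  ∀ ν : Measure Ω, MemPp p ν → KL ν π ≠ ⊤ →
    Wp p ν π ≤ Real.sqrt (2 * A * (KL ν π).toReal) + B

/-- One step of a Markov kernel acting on a measure. -/
noncomputable def stepK {Ω : Type*} [MeasurableSpace Ω] (P : Kernel Ω Ω) (μ : Measure Ω) :
    Measure Ω :=
  μ.bind (fun x => P x)

/-- `N`-fold iterate of a Markov kernel acting on a measure. -/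
noncomputable def iterK {Ω : Type*} [MeasurableSpace Ω] (P : Kernel Ω Ω) (μ : Measure Ω) :
    ℕ → Measure Ω
  | 0 => μ
  | (N + 1) => stepK P (iterK P μ N)

/-- Total variation distance. -/
noncomputable def tvDist {Ω : Type*} [MeasurableSpace Ω] (μ ν : Measure Ω) : ℝ :=
  sSup {r : ℝ | ∃ A : Set Ω, MeasurableSet A ∧ r = |(μ A).toReal - (ν A).toReal|}

end


/-!
Fix `ν` with `KL(ν‖π) < ∞` and a coupling `γ` of `π` and `μ` whose displacement is a.s. at most
`W∞(μ, π) + ε`. Pushing `ν` through the conditional kernel of `γ` gives a measure `ν'` together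
with a coupling of `ν` and `ν'` that is absolutely continuous with respect to `γ`, hence also
has displacement at most `W∞(μ, π) + ε`; by the data-processing inequality
`KL(ν'‖μ) ≤ KL(ν‖π)`. The triangle inequality for `W_p` (from the gluing lemma) along
`ν, ν', μ, π` then gives `W_p(ν, π) ≤ 2 (W∞(μ, π) + ε) + √(2C KL(ν‖π)) + M`.
-/

open InformationTheory

lemma eLpNorm_ofReal_eq_lintegral {α : Type*} [MeasurableSpace α] {f : α → ℝ} (hf : 0 ≤ f)
    {p : ℝ} (hp : 0 < p) (μ : Measure α) :
    eLpNorm f (ENNReal.ofReal p) μ = (∫⁻ x, ENNReal.ofReal (f x ^ p) ∂μ) ^ (1 / p) := by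
  rw [eLpNorm_eq_lintegral_rpow_enorm_toReal (by simpa using hp) ofReal_ne_top,
    toReal_ofReal hp.le]
  congr 1
  refine lintegral_congr fun x => ?_
  rw [Real.enorm_eq_ofReal (hf x), ofReal_rpow_of_nonneg (hf x) hp.le]

lemma lintegral_ofReal_rpow_ne_top_iff {α : Type*} [MeasurableSpace α] {f : α → ℝ} (hf : 0 ≤ f)
    {p : ℝ} (hp : 0 < p) (μ : Measure α) :
    (∫⁻ x, ENNReal.ofReal (f x ^ p) ∂μ) ≠ ⊤ ↔ eLpNorm f (ENNReal.ofReal p) μ ≠ ⊤ := by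
  rw [eLpNorm_ofReal_eq_lintegral hf hp, Ne, Ne, rpow_eq_top_iff_of_pos (by positivity)]

theorem exists_gluing {α β γ : Type*} [MeasurableSpace α] [MeasurableSpace β]
    [MeasurableSpace γ] [StandardBorelSpace α] [Nonempty α] [StandardBorelSpace γ] [Nonempty γ]
    (ρ₁ : Measure (α × β)) (ρ₂ : Measure (β × γ)) [IsFiniteMeasure ρ₁] [IsFiniteMeasure ρ₂]
    (h : ρ₁.snd = ρ₂.fst) :
    ∃ ρ : Measure (β × α × γ),
      ρ.map (fun w => (w.2.1, w.1)) = ρ₁ ∧ ρ.map (fun w => (w.1, w.2.2)) = ρ₂ := by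
  set η := (ρ₁.map Prod.swap).condKernel
  set κ := ρ₂.condKernel
  have hη : ρ₂.fst ⊗ₘ η = ρ₁.map Prod.swap := by
    rw [← h, ← Measure.fst_map_swap]
    exact (ρ₁.map Prod.swap).disintegrate _
  refine ⟨ρ₂.fst ⊗ₘ (η ×ₖ κ), ?_, ?_⟩
  · calc (ρ₂.fst ⊗ₘ (η ×ₖ κ)).map (fun w => (w.2.1, w.1))
        = ((ρ₂.fst ⊗ₘ (η ×ₖ κ)).map (Prod.map id Prod.fst)).map Prod.swap := by
          rw [Measure.map_map measurable_swap (by fun_prop)]; rfl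
      _ = ρ₁ := by
          rw [← Measure.compProd_map measurable_fst, ← Kernel.fst_eq, Kernel.fst_prod, hη,
            Measure.map_map measurable_swap measurable_swap, Prod.swap_swap_eq, Measure.map_id]
  · rw [show (fun w : β × α × γ => (w.1, w.2.2)) = Prod.map id Prod.snd from rfl,
      ← Measure.compProd_map measurable_snd, ← Kernel.snd_eq, Kernel.snd_prod]
    exact ρ₂.disintegrate _

lemma KL_eq_klDiv {α : Type*} [MeasurableSpace α] (μ ν : Measure α) [IsProbabilityMeasure μ]
    [IsProbabilityMeasure ν] : KL μ ν = klDiv μ ν := by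
  unfold KL
  split_ifs with h
  · simp [klDiv_of_ac_of_integrable h.1 h.2]
  · exact (klDiv_eq_top_iff.2 fun hac hint => h ⟨hac, hint⟩).symm

lemma KL_comp_le {α β : Type*} [MeasurableSpace α] [MeasurableSpace β] (κ : Kernel α β)
    [IsMarkovKernel κ] (μ ν : Measure α) [IsProbabilityMeasure μ] [IsProbabilityMeasure ν] :
    KL (κ ∘ₘ μ) (κ ∘ₘ ν) ≤ KL μ ν := by
  rw [KL_eq_klDiv, KL_eq_klDiv]
  exact klDiv_comp_right_le μ ν κ

section Coupling

variable {Ω : Type*} [MeasurableSpace Ω] {μ ν : Measure Ω} {γ : Measure (Ω × Ω)}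

lemma IsCoupling.isProbabilityMeasure [IsProbabilityMeasure μ] (h : IsCoupling γ μ ν) :
    IsProbabilityMeasure γ := by
  refine ⟨?_⟩
  rw [← Set.preimage_univ (f := Prod.fst), ← Measure.map_apply measurable_fst .univ, h.1,
    measure_univ]

lemma IsCoupling.isProbabilityMeasure_left [IsProbabilityMeasure γ] (h : IsCoupling γ μ ν) :
    IsProbabilityMeasure μ :=
  h.1 ▸ Measure.isProbabilityMeasure_map measurable_fst.aemeasurable

lemma IsCoupling.isProbabilityMeasure_right [IsProbabilityMeasure γ] (h : IsCoupling γ μ ν) :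
    IsProbabilityMeasure ν :=
  h.2 ▸ Measure.isProbabilityMeasure_map measurable_snd.aemeasurable

lemma IsCoupling.map_swap (h : IsCoupling γ μ ν) : IsCoupling (γ.map Prod.swap) ν μ :=
  ⟨by rw [← Measure.fst, Measure.fst_map_swap]; exact h.2,
    by rw [← Measure.snd, Measure.snd_map_swap]; exact h.1⟩

lemma IsCoupling.memLp_comp_fst (h : IsCoupling γ μ ν) {f : Ω → ℝ} {q : ℝ≥0∞}
    (hf : MemLp f q μ) : MemLp (fun z : Ω × Ω => f z.1) q γ := by
  rw [← h.1] at hf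
  exact (memLp_map_measure_iff hf.1 measurable_fst.aemeasurable).1 hf

lemma IsCoupling.memLp_comp_snd (h : IsCoupling γ μ ν) {f : Ω → ℝ} {q : ℝ≥0∞}
    (hf : MemLp f q ν) : MemLp (fun z : Ω × Ω => f z.2) q γ := by
  rw [← h.2] at hf
  exact (memLp_map_measure_iff hf.1 measurable_snd.aemeasurable).1 hf

/-- `ν'` is the image of `ν` under the conditional kernel of `γ`; the bound on `KL` is the
data-processing inequality. -/
theorem exists_isCoupling_absolutelyContinuous_KL_le [StandardBorelSpace Ω] {π : Measure Ω}
    [IsProbabilityMeasure ν] [IsProbabilityMeasure γ] (hγ : IsCoupling γ π μ) (hνπ : ν ≪ π) :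
    ∃ (ν' : Measure Ω) (ρ : Measure (Ω × Ω)), IsCoupling ρ ν ν' ∧ ρ ≪ γ ∧ KL ν' μ ≤ KL ν π := by
  have := nonempty_of_isProbabilityMeasure ν
  have := hγ.isProbabilityMeasure_left
  have hdis : π ⊗ₘ γ.condKernel = γ := hγ.1 ▸ γ.disintegrate _
  have hac : ν ⊗ₘ γ.condKernel ≪ γ := by
    simpa only [hdis] using hνπ.compProd_left γ.condKernel
  have hμ : γ.condKernel ∘ₘ π = μ := by
    rw [← Measure.snd_compProd, hdis]
    exact hγ.2
  refine ⟨γ.condKernel ∘ₘ ν, ν ⊗ₘ γ.condKernel,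
    ⟨Measure.fst_compProd ν _, Measure.snd_compProd ν _⟩, hac, ?_⟩
  exact hμ ▸ KL_comp_le _ ν π

end Coupling

section Transport

variable {Ω : Type*} [MeasurableSpace Ω] [PseudoMetricSpace Ω] {p : ℝ} {μ ν : Measure Ω}

noncomputable def lpCost (p : ℝ) (γ : Measure (Ω × Ω)) : ℝ≥0∞ :=
  eLpNorm (fun z : Ω × Ω => dist z.1 z.2) (ENNReal.ofReal p) γ

lemma Wp_eq_sInf_lpCost (hp : 0 < p) (μ ν : Measure Ω) :
    Wp p μ ν = sInf {r : ℝ | ∃ γ : Measure (Ω × Ω), IsProbabilityMeasure γ ∧ IsCoupling γ μ ν ∧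
      lpCost p γ ≠ ⊤ ∧ r = (lpCost p γ).toReal} := by
  have hd : 0 ≤ fun z : Ω × Ω => dist z.1 z.2 := fun _ => dist_nonneg
  simp only [Wp, lpCost, lintegral_ofReal_rpow_ne_top_iff hd hp, eLpNorm_ofReal_eq_lintegral hd hp]

lemma Wp_le_lpCost (hp : 0 < p) {γ : Measure (Ω × Ω)} [IsProbabilityMeasure γ]
    (hγ : IsCoupling γ μ ν) (hfin : lpCost p γ ≠ ⊤) : Wp p μ ν ≤ (lpCost p γ).toReal := by
  rw [Wp_eq_sInf_lpCost hp]
  exact csInf_le ⟨0, by rintro _ ⟨_, _, _, _, rfl⟩; exact toReal_nonneg⟩ ⟨γ, ‹_›, hγ, hfin, rfl⟩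

lemma exists_lpCost_lt_Wp_add (hp : 0 < p)
    (h : ∃ γ : Measure (Ω × Ω), IsProbabilityMeasure γ ∧ IsCoupling γ μ ν ∧ lpCost p γ ≠ ⊤)
    {ε : ℝ} (hε : 0 < ε) :
    ∃ γ : Measure (Ω × Ω), IsProbabilityMeasure γ ∧ IsCoupling γ μ ν ∧ lpCost p γ ≠ ⊤ ∧
      (lpCost p γ).toReal < Wp p μ ν + ε := by
  obtain ⟨γ, hγ, hc, hfin⟩ := h
  have hlt := lt_add_of_pos_right (Wp p μ ν) hε
  rw [Wp_eq_sInf_lpCost hp] at hlt ⊢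
  obtain ⟨_, ⟨γ', hγ', hc', hfin', rfl⟩, hlt⟩ :=
    exists_lt_of_csInf_lt (by exact ⟨_, γ, hγ, hc, hfin, rfl⟩) hlt
  exact ⟨γ', hγ', hc', hfin', hlt⟩

lemma lpCost_le_of_ae_dist_le {γ : Measure (Ω × Ω)} [IsProbabilityMeasure γ] {r : ℝ}
    (h : ∀ᵐ z ∂γ, dist z.1 z.2 ≤ r) : lpCost p γ ≤ ENNReal.ofReal r := by
  have h' : ∀ᵐ z ∂γ, ‖dist z.1 z.2‖ ≤ r :=
    h.mono fun z hz => by rwa [Real.norm_of_nonneg dist_nonneg]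
  simpa [lpCost] using eLpNorm_le_of_ae_bound (p := ENNReal.ofReal p) h'

lemma Wp_le_of_ae_dist_le (hp : 0 < p) {γ : Measure (Ω × Ω)} [IsProbabilityMeasure γ]
    (hγ : IsCoupling γ μ ν) {r : ℝ} (hr : 0 ≤ r) (h : ∀ᵐ z ∂γ, dist z.1 z.2 ≤ r) :
    Wp p μ ν ≤ r := by
  have hle : lpCost p γ ≤ ENNReal.ofReal r := lpCost_le_of_ae_dist_le h
  calc Wp p μ ν ≤ (lpCost p γ).toReal :=
        Wp_le_lpCost hp hγ (ne_top_of_le_ne_top ofReal_ne_top hle)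
    _ ≤ r := toReal_le_of_le_ofReal hr hle

lemma exists_isCoupling_ae_dist_le (h : Winf μ ν ≠ ⊤) {ε : ℝ} (hε : 0 < ε) :
    ∃ γ : Measure (Ω × Ω), IsProbabilityMeasure γ ∧ IsCoupling γ μ ν ∧
      ∀ᵐ z ∂γ, dist z.1 z.2 ≤ (Winf μ ν).toReal + ε := by
  have hlt : Winf μ ν < Winf μ ν + ENNReal.ofReal ε := lt_add_right h (by simpa using hε)
  obtain ⟨_, ⟨γ, hγ, hc, rfl⟩, hγlt⟩ := sInf_lt_iff.1 hlt
  refine ⟨γ, hγ, hc,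
    (ae_le_essSup fun z : Ω × Ω => ENNReal.ofReal (dist z.1 z.2)).mono fun z hz => ?_⟩
  rw [← ofReal_le_ofReal_iff (by positivity), ofReal_add toReal_nonneg hε.le, ofReal_toReal h]
  exact hz.trans hγlt.le

lemma memPp_of_memLp (hp : 0 < p) [IsProbabilityMeasure μ] {x : Ω}
    (h : MemLp (fun y => dist y x) (ENNReal.ofReal p) μ) : MemPp p μ :=
  ⟨‹_›, x, (lintegral_ofReal_rpow_ne_top_iff (fun _ => dist_nonneg) hp μ).2 h.2.ne⟩

variable [SecondCountableTopology Ω] [OpensMeasurableSpace Ω]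

lemma lpCost_ne_top_iff_memLp {γ : Measure (Ω × Ω)} :
    lpCost p γ ≠ ⊤ ↔ MemLp (fun z : Ω × Ω => dist z.1 z.2) (ENNReal.ofReal p) γ :=
  ⟨fun h => ⟨measurable_dist.aestronglyMeasurable, h.lt_top⟩, fun h => h.2.ne⟩

lemma MemPp.memLp_dist (hp : 0 < p) (h : MemPp p μ) (x : Ω) :
    MemLp (fun y => dist y x) (ENNReal.ofReal p) μ := by
  obtain ⟨_, x₀, hx₀⟩ := h
  rw [lintegral_ofReal_rpow_ne_top_iff (fun _ => dist_nonneg) hp] at hx₀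
  have h₀ : MemLp (fun y => dist y x₀) (ENNReal.ofReal p) μ :=
    ⟨(measurable_id.dist measurable_const).aestronglyMeasurable, hx₀.lt_top⟩
  refine (h₀.add (memLp_const (dist x₀ x))).mono'
    (measurable_id.dist measurable_const).aestronglyMeasurable (.of_forall fun y => ?_)
  simpa using dist_triangle y x₀ x

lemma exists_isCoupling_lpCost_ne_top (hp : 0 < p) (hμ : MemPp p μ) (hν : MemPp p ν) :
    ∃ γ : Measure (Ω × Ω), IsProbabilityMeasure γ ∧ IsCoupling γ μ ν ∧ lpCost p γ ≠ ⊤ := by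
  have := hμ.1
  have := hν.1
  obtain ⟨x⟩ := nonempty_of_isProbabilityMeasure μ
  have hc : IsCoupling (μ.prod ν) μ ν := ⟨Measure.fst_prod, Measure.snd_prod⟩
  refine ⟨μ.prod ν, inferInstance, hc, lpCost_ne_top_iff_memLp.2 ?_⟩
  refine ((hc.memLp_comp_fst (hμ.memLp_dist hp x)).add
    (hc.memLp_comp_snd (hν.memLp_dist hp x))).mono' measurable_dist.aestronglyMeasurable
    (.of_forall fun z => ?_)
  simpa using dist_triangle_right z.1 z.2 x

lemma MemPp.of_isCoupling (hp : 0 < p) {γ : Measure (Ω × Ω)} (hμ : MemPp p μ)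
    (hγ : IsCoupling γ μ ν) (hfin : lpCost p γ ≠ ⊤) : MemPp p ν := by
  have := hμ.1
  have := hγ.isProbabilityMeasure
  have := hγ.isProbabilityMeasure_right
  obtain ⟨x⟩ := nonempty_of_isProbabilityMeasure μ
  have hsnd : MemLp (fun z : Ω × Ω => dist z.2 x) (ENNReal.ofReal p) γ := by
    refine ((lpCost_ne_top_iff_memLp.1 hfin).add (hγ.memLp_comp_fst (hμ.memLp_dist hp x))).mono'
      (measurable_snd.dist measurable_const).aestronglyMeasurable (.of_forall fun z => ?_)
    simpa [dist_comm z.1 z.2] using dist_triangle z.2 z.1 x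
  refine memPp_of_memLp hp (x := x) ?_
  rw [← hγ.2]
  exact (memLp_map_measure_iff (measurable_id.dist measurable_const).aestronglyMeasurable
    measurable_snd.aemeasurable).2 hsnd

lemma lpCost_map_le_add (hp : 1 ≤ p) (ρ : Measure (Ω × Ω × Ω)) :
    lpCost p (ρ.map fun w => (w.2.1, w.2.2)) ≤
      lpCost p (ρ.map fun w => (w.2.1, w.1)) + lpCost p (ρ.map fun w => (w.1, w.2.2)) := by
  simp only [lpCost]
  rw [eLpNorm_map_measure measurable_dist.aestronglyMeasurable (by fun_prop),
    eLpNorm_map_measure measurable_dist.aestronglyMeasurable (by fun_prop),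
    eLpNorm_map_measure measurable_dist.aestronglyMeasurable (by fun_prop)]
  refine (eLpNorm_mono_real fun w => ?_).trans (eLpNorm_add_le
    (measurable_dist.comp (by fun_prop)).aestronglyMeasurable
    (measurable_dist.comp (by fun_prop)).aestronglyMeasurable (by simpa using hp))
  simpa using dist_triangle w.2.1 w.1 w.2.2

end Transport

theorem Wp_triangle {Ω : Type*} [PseudoMetricSpace Ω] [MeasurableSpace Ω] [PolishSpace Ω]
    [BorelSpace Ω] {p : ℝ} (hp : 1 ≤ p) {μ ν ξ : Measure Ω} (hμ : MemPp p μ) (hν : MemPp p ν)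
    (hξ : MemPp p ξ) : Wp p μ ξ ≤ Wp p μ ν + Wp p ν ξ := by
  have hp0 : 0 < p := by linarith
  have := hμ.1
  have := nonempty_of_isProbabilityMeasure μ
  refine le_of_forall_pos_le_add fun ε hε => ?_
  obtain ⟨γ₁, _, hc₁, hfin₁, hlt₁⟩ :=
    exists_lpCost_lt_Wp_add hp0 (exists_isCoupling_lpCost_ne_top hp0 hμ hν) (half_pos hε)
  obtain ⟨γ₂, _, hc₂, hfin₂, hlt₂⟩ :=
    exists_lpCost_lt_Wp_add hp0 (exists_isCoupling_lpCost_ne_top hp0 hν hξ) (half_pos hε)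
  obtain ⟨ρ, hρ₁, hρ₂⟩ := exists_gluing γ₁ γ₂ (hc₁.2.trans hc₂.1.symm)
  have hc : IsCoupling (ρ.map fun w => (w.2.1, w.2.2)) μ ξ := by
    constructor
    · rw [← hc₁.1, ← hρ₁, Measure.map_map measurable_fst (by fun_prop),
        Measure.map_map measurable_fst (by fun_prop)]
      rfl
    · rw [← hc₂.2, ← hρ₂, Measure.map_map measurable_snd (by fun_prop),
        Measure.map_map measurable_snd (by fun_prop)]
      rfl
  have := hc.isProbabilityMeasure
  have hle := lpCost_map_le_add hp ρ
  rw [hρ₁, hρ₂] at hle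
  calc Wp p μ ξ ≤ (lpCost p (ρ.map fun w => (w.2.1, w.2.2))).toReal :=
        Wp_le_lpCost hp0 hc (ne_top_of_le_ne_top (add_ne_top.2 ⟨hfin₁, hfin₂⟩) hle)
    _ ≤ (lpCost p γ₁).toReal + (lpCost p γ₂).toReal := toReal_le_add hle hfin₁ hfin₂
    _ ≤ Wp p μ ν + Wp p ν ξ + ε := by linarith

lemma exists_isCoupling_ae_dist_le_KL_le {Ω : Type*} [PseudoMetricSpace Ω] [MeasurableSpace Ω]
    [PolishSpace Ω] [BorelSpace Ω] {μ π ν : Measure Ω} [IsProbabilityMeasure ν]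
    {γ : Measure (Ω × Ω)} [IsProbabilityMeasure γ] (hγ : IsCoupling γ μ π) {r : ℝ}
    (hd : ∀ᵐ z ∂γ, dist z.1 z.2 ≤ r) (hνπ : ν ≪ π) :
    ∃ (ν' : Measure Ω) (ρ : Measure (Ω × Ω)), IsProbabilityMeasure ρ ∧ IsCoupling ρ ν ν' ∧
      (∀ᵐ z ∂ρ, dist z.1 z.2 ≤ r) ∧ KL ν' μ ≤ KL ν π := by
  have : IsProbabilityMeasure (γ.map Prod.swap) := Measure.isProbabilityMeasure_map (by fun_prop)
  obtain ⟨ν', ρ, hρ, hργ, hKL⟩ := exists_isCoupling_absolutelyContinuous_KL_le hγ.map_swap hνπ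
  refine ⟨ν', ρ, hρ.isProbabilityMeasure, hρ, hργ.ae_le ?_, hKL⟩
  refine (ae_map_iff (by fun_prop) (measurableSet_le (by fun_prop) (by fun_prop))).2 ?_
  simpa only [Prod.fst_swap, Prod.snd_swap, dist_comm] using hd

theorem statement_3_general {Ω : Type*} [MetricSpace Ω] [PolishSpace Ω] [MeasurableSpace Ω] [BorelSpace Ω]
    (p C M : ℝ) (hp1 : 1 ≤ p) (hC : 0 ≤ C)
    (μ π : Measure Ω) (hμ : MemPp p μ) (hπ : MemPp p π)
    (hWinf : Winf μ π ≠ ⊤)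
    (hdef : DefTp p C M μ) :
    DefTp p C (M + 2 * (Winf μ π).toReal) π := by
  intro ν hν hKL
  have hp0 : 0 < p := by linarith
  have := hν.1
  have hνπ : ν ≪ π := by
    by_contra h
    exact hKL (by simp [KL, h])
  refine le_of_forall_pos_le_add fun ε hε => ?_
  set r := (Winf μ π).toReal + ε / 2
  have hr : 0 ≤ r := by positivity
  obtain ⟨γ, hγ, hc, hd⟩ := exists_isCoupling_ae_dist_le hWinf (half_pos hε)
  obtain ⟨ν', ρ, hρ, hρc, hdρ, hKL'⟩ := exists_isCoupling_ae_dist_le_KL_le hc hd hνπ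
  have hν' : MemPp p ν' :=
    hν.of_isCoupling hp0 hρc (ne_top_of_le_ne_top ofReal_ne_top (lpCost_le_of_ae_dist_le hdρ))
  have hWν' : Wp p ν' μ ≤ Real.sqrt (2 * C * (KL ν π).toReal) + M := by
    refine (hdef ν' hν' (ne_top_of_le_ne_top hKL hKL')).trans (add_le_add_left ?_ M)
    exact Real.sqrt_le_sqrt (mul_le_mul_of_nonneg_left (toReal_mono hKL hKL') (by positivity))
  calc Wp p ν π ≤ Wp p ν ν' + (Wp p ν' μ + Wp p μ π) :=
        (Wp_triangle hp1 hν hν' hπ).trans (add_le_add_right (Wp_triangle hp1 hν' hμ hπ) _)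
    _ ≤ r + (Real.sqrt (2 * C * (KL ν π).toReal) + M + r) := by
        gcongr
        exacts [Wp_le_of_ae_dist_le hp0 hρc hr hdρ, Wp_le_of_ae_dist_le hp0 hc hr hd]
    _ = _ := by ring

theorem statement_3 {Ω : Type*} [MetricSpace Ω] [PolishSpace Ω] [MeasurableSpace Ω] [BorelSpace Ω]
    (p C M : ℝ) (hp1 : 1 ≤ p) (hp2 : p ≤ 2) (hC : 0 ≤ C) (hM : 0 ≤ M)
    (μ π : Measure Ω) (hμ : MemPp p μ) (hπ : MemPp p π)
    (hWinf : Winf μ π ≠ ⊤)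
    (hdef : DefTp p C M μ) :
    DefTp p C (M + 2 * (Winf μ π).toReal) π :=
  statement_3_general p C M hp1 hC μ π hμ hπ hWinf hdef
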